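/- Let (X,φ) be a minimal tds that is an m:1 topomorphic extension of its MEF (Y,ψ): there is a measurable γ: Y → X^m with π∘γ_i = id whose point set Γ = {γ_i(y) : i ≤ m, y ∈ Y} has full measure for all φ-invariant measures, and m is minimal with this property. Then (X,φ) is factor mean (m+1)-equicontinuous: for all ε > 0 there is δ > 0 such that max_{1≤i<j≤m+1} d_Y(π(x_i),π(x_j)) < δ implies D̄_{m+1}^φ(x_1,…,x_{m+1}) < ε. -/

import Mathlib

open Filter Metric Set

/-- Minimum pairwise distance of an `m`-tuple. -/
noncomputable def Dmin {X : Type*} [MetricSpace X] {m : ℕ} (x : Fin m → X) : ℝ :=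
  sInf {r : ℝ | ∃ i j : Fin m, i < j ∧ r = dist (x i) (x j)}

/-- Maximum pairwise distance of an `m`-tuple. -/
noncomputable def Dmax {X : Type*} [MetricSpace X] {m : ℕ} (x : Fin m → X) : ℝ :=
  sSup {r : ℝ | ∃ i j : Fin m, i < j ∧ r = dist (x i) (x j)}

/-- The Besicovitch `m`-distance of an `m`-tuple under the dynamics `φ`. -/
noncomputable def DBar {X : Type*} [MetricSpace X] {m : ℕ} (φ : X → X) (x : Fin m → X) : ℝ :=
  Filter.limsup (fun n : ℕ => (∑ i ∈ Finset.range n, Dmin (fun j => φ^[i] (x j))) / n)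
    Filter.atTop

open MeasureTheory

/-- The topological support of a measure. -/
def msupp {Z : Type*} [TopologicalSpace Z] [MeasurableSpace Z] (μ : Measure Z) : Set Z :=
  {z | ∀ U : Set Z, IsOpen U → z ∈ U → 0 < μ U}

open TopologicalSpace

namespace Stmt16Aux

section Dlemmas

variable {W : Type*} [MetricSpace W] {k : ℕ}

lemma pairset_finite (w : Fin k → W) :
    {r : ℝ | ∃ i j : Fin k, i < j ∧ r = dist (w i) (w j)}.Finite := by
  have hsub : {r : ℝ | ∃ i j : Fin k, i < j ∧ r = dist (w i) (w j)} ⊆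
      (fun p : Fin k × Fin k => dist (w p.1) (w p.2)) '' Set.univ := by
    rintro r ⟨i, j, -, rfl⟩
    exact ⟨(i, j), trivial, rfl⟩
  exact (Set.finite_univ.image _).subset hsub

lemma Dmin_le {w : Fin k → W} {i j : Fin k} (h : i < j) : Dmin w ≤ dist (w i) (w j) :=
  csInf_le (pairset_finite w).bddBelow ⟨i, j, h, rfl⟩

lemma Dmin_nonneg {w : Fin k → W} (h : ∃ i j : Fin k, i < j) : 0 ≤ Dmin w := by
  obtain ⟨i, j, hij⟩ := h
  refine le_csInf ⟨_, ⟨i, j, hij, rfl⟩⟩ ?_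
  rintro r ⟨a, b, -, rfl⟩
  exact dist_nonneg

lemma dist_le_Dmax {w : Fin k → W} {i j : Fin k} (h : i < j) : dist (w i) (w j) ≤ Dmax w :=
  le_csSup (pairset_finite w).bddAbove ⟨i, j, h, rfl⟩

lemma Dmax_nonneg {w : Fin k → W} (h : ∃ i j : Fin k, i < j) : 0 ≤ Dmax w := by
  obtain ⟨i, j, hij⟩ := h
  exact dist_nonneg.trans (dist_le_Dmax hij)

end Dlemmas

section Avg

variable {Z : Type*}

/-- Birkhoff average of `f` along the orbit of `z` under `T`. -/
noncomputable def avg (T : Z → Z) (z : Z) (f : Z → ℝ) (n : ℕ) : ℝ :=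
  (∑ i ∈ Finset.range n, f (T^[i] z)) / n

lemma avg_abs_le (T : Z → Z) (z : Z) {f : Z → ℝ} {M : ℝ} (h : ∀ w, |f w| ≤ M) (n : ℕ) :
    |avg T z f n| ≤ M := by
  have hM0 : 0 ≤ M := le_trans (abs_nonneg _) (h z)
  rcases Nat.eq_zero_or_pos n with rfl | hn
  · simpa [avg] using hM0
  · have h1 : |∑ i ∈ Finset.range n, f (T^[i] z)| ≤ n * M := by
      calc |∑ i ∈ Finset.range n, f (T^[i] z)| ≤ ∑ i ∈ Finset.range n, |f (T^[i] z)| :=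
            Finset.abs_sum_le_sum_abs _ _
        _ ≤ ∑ _i ∈ Finset.range n, M := Finset.sum_le_sum fun i _ => h _
        _ = n * M := by simp [Finset.sum_const, mul_comm]
    have hn0 : (0 : ℝ) < n := by exact_mod_cast hn
    rw [avg, abs_div, abs_of_pos hn0, div_le_iff₀ hn0]
    simpa [mul_comm] using h1

lemma avg_nonneg (T : Z → Z) (z : Z) {f : Z → ℝ} (h : ∀ w, 0 ≤ f w) (n : ℕ) :
    0 ≤ avg T z f n :=
  div_nonneg (Finset.sum_nonneg fun i _ => h _) (Nat.cast_nonneg n)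

lemma avg_mono (T : Z → Z) (z : Z) {f g : Z → ℝ} (h : ∀ w, f w ≤ g w) (n : ℕ) :
    avg T z f n ≤ avg T z g n := by
  rw [avg, avg, div_eq_mul_inv, div_eq_mul_inv]
  exact mul_le_mul_of_nonneg_right (Finset.sum_le_sum fun i _ => h _) (by positivity)

lemma avg_add (T : Z → Z) (z : Z) (f g : Z → ℝ) (n : ℕ) :
    avg T z (fun w => f w + g w) n = avg T z f n + avg T z g n := by
  simp [avg, Finset.sum_add_distrib, add_div]

lemma avg_smul (T : Z → Z) (z : Z) (c : ℝ) (f : Z → ℝ) (n : ℕ) :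
    avg T z (fun w => c * f w) n = c * avg T z f n := by
  rw [avg, avg, ← Finset.mul_sum, mul_div_assoc]

lemma avg_const (T : Z → Z) (z : Z) (c : ℝ) {n : ℕ} (hn : 1 ≤ n) :
    avg T z (fun _ => c) n = c := by
  have hn0 : (n : ℝ) ≠ 0 := by exact_mod_cast Nat.one_le_iff_ne_zero.1 hn
  simp only [avg, Finset.sum_const, Finset.card_range, nsmul_eq_mul]
  field_simp

lemma avg_const_tendsto (T : Z → Z) (z : Z) (c : ℝ) :
    Tendsto (avg T z (fun _ => c)) atTop (nhds c) := by
  refine tendsto_const_nhds.congr' ?_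
  filter_upwards [eventually_ge_atTop 1] with n hn
  exact (avg_const T z c hn).symm

lemma avg_comp (T : Z → Z) (z : Z) (f : Z → ℝ) (n : ℕ) :
    avg T z (f ∘ T) n = avg T z f n + (f (T^[n] z) - f z) / n := by
  have h1 : ∑ i ∈ Finset.range n, (f ∘ T) (T^[i] z)
      = (∑ i ∈ Finset.range n, f (T^[i] z)) + (f (T^[n] z) - f z) := by
    have h2 : ∀ i : ℕ, (f ∘ T) (T^[i] z) = f (T^[i + 1] z) := by
      intro i
      simp [Function.comp, Function.iterate_succ_apply']
    calc ∑ i ∈ Finset.range n, (f ∘ T) (T^[i] z) = ∑ i ∈ Finset.range n, f (T^[i + 1] z) := by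
          simp only [h2]
      _ = (∑ i ∈ Finset.range (n + 1), f (T^[i] z)) - f (T^[0] z) := by
          rw [Finset.sum_range_succ']; ring
      _ = (∑ i ∈ Finset.range n, f (T^[i] z)) + (f (T^[n] z) - f z) := by
          rw [Finset.sum_range_succ]; simp; ring
  rw [avg, avg, h1, add_div]

lemma tendsto_limUnder_of_bdd (𝒰 : Ultrafilter ℕ) (u : ℕ → ℝ) {M : ℝ} (hu : ∀ n, |u n| ≤ M) :
    Tendsto u 𝒰 (nhds (limUnder 𝒰 u)) := by
  refine tendsto_nhds_limUnder ?_
  have hle : (𝒰.map u : Filter ℝ) ≤ Filter.principal (Set.Icc (-M) M) := by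
    rw [le_principal_iff]
    have : u ⁻¹' Set.Icc (-M) M = Set.univ := by
      ext n
      simpa [Set.mem_Icc] using abs_le.1 (hu n)
    change u ⁻¹' Set.Icc (-M) M ∈ (𝒰 : Filter ℕ)
    rw [this]
    exact Filter.univ_mem
  obtain ⟨a, -, ha⟩ := (isCompact_Icc (a := -M) (b := M)).ultrafilter_le_nhds (𝒰.map u) hle
  exact ⟨a, ha⟩

end Avg

end Stmt16Aux

namespace Stmt16Aux

section Functional

variable {Z : Type*} [TopologicalSpace Z]

/-- The value of the limit functional along the ultrafilter `𝒰` on orbital averages. -/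
noncomputable def limU (𝒰 : Ultrafilter ℕ) (T : Z → Z) (z : Z) (f : Z → ℝ) : ℝ :=
  limUnder (𝒰 : Filter ℕ) (avg T z f)

lemma limU_tendsto (𝒰 : Ultrafilter ℕ) (T : Z → Z) (z : Z) {f : Z → ℝ} {Mf : ℝ}
    (h : ∀ w, |f w| ≤ Mf) : Tendsto (avg T z f) 𝒰 (nhds (limU 𝒰 T z f)) :=
  tendsto_limUnder_of_bdd 𝒰 _ (avg_abs_le T z h)

/-- Admissible test functions for a set `K` : continuous, `[0,1]`-valued, `1` on `K`. -/
def adm (K : Set Z) (f : Z → ℝ) : Prop :=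
  Continuous f ∧ (∀ w, 0 ≤ f w) ∧ (∀ w, f w ≤ 1) ∧ ∀ w ∈ K, f w = 1

lemma adm_abs_le {K : Set Z} {f : Z → ℝ} (h : adm K f) : ∀ w, |f w| ≤ 1 := fun w =>
  abs_le.2 ⟨by linarith [h.2.1 w], h.2.2.1 w⟩

lemma adm_one (K : Set Z) : adm K (fun _ => (1 : ℝ)) :=
  ⟨continuous_const, fun _ => zero_le_one, fun _ => le_rfl, fun _ _ => rfl⟩

lemma adm_mono {K₁ K₂ : Set Z} (h : K₁ ⊆ K₂) {f : Z → ℝ} (hf : adm K₂ f) : adm K₁ f :=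
  ⟨hf.1, hf.2.1, hf.2.2.1, fun w hw => hf.2.2.2 w (h hw)⟩

/-- The collection of functional values over admissible functions. -/
def SSet (𝒰 : Ultrafilter ℕ) (T : Z → Z) (z : Z) (K : Set Z) : Set ℝ :=
  {r : ℝ | ∃ f : Z → ℝ, adm K f ∧ r = limU 𝒰 T z f}

variable (𝒰 : Ultrafilter ℕ) (T : Z → Z) (z : Z)

lemma limU_nonneg {f : Z → ℝ} (h0 : ∀ w, 0 ≤ f w) {Mf : ℝ} (hb : ∀ w, |f w| ≤ Mf) :
    0 ≤ limU 𝒰 T z f :=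
  ge_of_tendsto' (limU_tendsto 𝒰 T z hb) (fun n => avg_nonneg T z h0 n)

lemma limU_one (h𝒰le : (𝒰 : Filter ℕ) ≤ atTop) : limU 𝒰 T z (fun _ => (1 : ℝ)) = 1 :=
  tendsto_nhds_unique (limU_tendsto 𝒰 T z (adm_abs_le (adm_one (∅ : Set Z))))
    ((avg_const_tendsto T z 1).mono_left h𝒰le)

lemma limU_comp (h𝒰le : (𝒰 : Filter ℕ) ≤ atTop) {f : Z → ℝ} {Mf : ℝ}
    (hb : ∀ w, |f w| ≤ Mf) : limU 𝒰 T z (f ∘ T) = limU 𝒰 T z f := by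
  have hbc : ∀ w, |(f ∘ T) w| ≤ Mf := fun w => hb (T w)
  have herr : Tendsto (fun n : ℕ => (f (T^[n] z) - f z) / n) atTop (nhds 0) := by
    have hb2 : ∀ n : ℕ, ‖(f (T^[n] z) - f z) / n‖ ≤ (2 * Mf) / n := by
      intro n
      rw [norm_div, Real.norm_natCast]
      have h1 : ‖f (T^[n] z) - f z‖ ≤ 2 * Mf := by
        have hA := hb (T^[n] z); have hB := hb z
        rw [Real.norm_eq_abs]
        calc |f (T^[n] z) - f z| ≤ |f (T^[n] z)| + |f z| := abs_sub _ _
          _ ≤ 2 * Mf := by linarith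
      exact div_le_div_of_nonneg_right h1 (Nat.cast_nonneg n)
    exact squeeze_zero_norm hb2 (tendsto_const_div_atTop_nhds_zero_nat (2 * Mf))
  have h2 : Tendsto (avg T z (f ∘ T)) 𝒰 (nhds (limU 𝒰 T z f + 0)) := by
    refine Tendsto.congr (fun n => (avg_comp T z f n).symm) ?_
    exact (limU_tendsto 𝒰 T z hb).add (herr.mono_left h𝒰le)
  rw [add_zero] at h2
  exact tendsto_nhds_unique (limU_tendsto 𝒰 T z hbc) h2

lemma SSet_nonempty (K : Set Z) : (SSet 𝒰 T z K).Nonempty :=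
  ⟨limU 𝒰 T z (fun _ => 1), fun _ => 1, adm_one K, rfl⟩

lemma SSet_nonneg {K : Set Z} : ∀ r ∈ SSet 𝒰 T z K, 0 ≤ r := by
  rintro r ⟨f, hf, rfl⟩
  exact limU_nonneg 𝒰 T z hf.2.1 (adm_abs_le hf)

lemma SSet_bddBelow (K : Set Z) : BddBelow (SSet 𝒰 T z K) :=
  ⟨0, SSet_nonneg 𝒰 T z⟩

/-- The "content" value of a set `K`. -/
noncomputable def lamR (K : Set Z) : ℝ := sInf (SSet 𝒰 T z K)

lemma lamR_nonneg (K : Set Z) : 0 ≤ lamR 𝒰 T z K :=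
  le_csInf (SSet_nonempty 𝒰 T z K) (SSet_nonneg 𝒰 T z)

lemma one_mem_SSet (h𝒰le : (𝒰 : Filter ℕ) ≤ atTop) (K : Set Z) : (1 : ℝ) ∈ SSet 𝒰 T z K :=
  ⟨fun _ => 1, adm_one K, (limU_one 𝒰 T z h𝒰le).symm⟩

lemma lamR_le_one (h𝒰le : (𝒰 : Filter ℕ) ≤ atTop) (K : Set Z) : lamR 𝒰 T z K ≤ 1 :=
  csInf_le (SSet_bddBelow 𝒰 T z K) (one_mem_SSet 𝒰 T z h𝒰le K)

lemma lamR_mono {K₁ K₂ : Set Z} (h : K₁ ⊆ K₂) : lamR 𝒰 T z K₁ ≤ lamR 𝒰 T z K₂ := by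
  refine csInf_le_csInf (SSet_bddBelow 𝒰 T z K₁) (SSet_nonempty 𝒰 T z K₂) ?_
  rintro r ⟨f, hf, rfl⟩
  exact ⟨f, adm_mono h hf, rfl⟩

lemma lamR_univ (h𝒰le : (𝒰 : Filter ℕ) ≤ atTop) : lamR 𝒰 T z (univ : Set Z) = 1 := by
  refine le_antisymm (lamR_le_one 𝒰 T z h𝒰le _) (le_csInf (SSet_nonempty 𝒰 T z _) ?_)
  rintro r ⟨f, hf, rfl⟩
  have hf1 : f = fun _ => (1 : ℝ) := funext fun w => hf.2.2.2 w (mem_univ w)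
  rw [hf1, limU_one 𝒰 T z h𝒰le]

lemma lamR_union_le (h𝒰le : (𝒰 : Filter ℕ) ≤ atTop) (K₁ K₂ : Set Z) :
    lamR 𝒰 T z (K₁ ∪ K₂) ≤ lamR 𝒰 T z K₁ + lamR 𝒰 T z K₂ := by
  have key2 : ∀ r₁ ∈ SSet 𝒰 T z K₁, ∀ r₂ ∈ SSet 𝒰 T z K₂,
      lamR 𝒰 T z (K₁ ∪ K₂) ≤ r₁ + r₂ := by
    rintro r₁ ⟨f₁, hf₁, rfl⟩ r₂ ⟨f₂, hf₂, rfl⟩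
    have hadm : adm (K₁ ∪ K₂) (fun w => min (f₁ w + f₂ w) 1) := by
      refine ⟨(hf₁.1.add hf₂.1).min continuous_const, ?_, fun w => min_le_right _ _, ?_⟩
      · exact fun w => le_min (add_nonneg (hf₁.2.1 w) (hf₂.2.1 w)) zero_le_one
      · rintro w (hw | hw)
        · have h1 : f₁ w = 1 := hf₁.2.2.2 w hw
          have h2 : (1 : ℝ) ≤ f₁ w + f₂ w := by have := hf₂.2.1 w; linarith
          exact min_eq_right h2
        · have h1 : f₂ w = 1 := hf₂.2.2.2 w hw
          have h2 : (1 : ℝ) ≤ f₁ w + f₂ w := by have := hf₁.2.1 w; linarith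
          exact min_eq_right h2
    have hle : limU 𝒰 T z (fun w => min (f₁ w + f₂ w) 1) ≤ limU 𝒰 T z f₁ + limU 𝒰 T z f₂ := by
      refine le_of_tendsto_of_tendsto' (limU_tendsto 𝒰 T z (adm_abs_le hadm))
        (((limU_tendsto 𝒰 T z (adm_abs_le hf₁)).add
          (limU_tendsto 𝒰 T z (adm_abs_le hf₂))).congr
            (fun n => (avg_add T z f₁ f₂ n).symm)) ?_
      exact fun n => avg_mono T z (fun w => min_le_left _ _) n
    exact (csInf_le (SSet_bddBelow 𝒰 T z _) ⟨_, hadm, rfl⟩).trans hle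
  have step1 : ∀ r₁ ∈ SSet 𝒰 T z K₁,
      lamR 𝒰 T z (K₁ ∪ K₂) - lamR 𝒰 T z K₂ ≤ r₁ := by
    intro r₁ h₁
    have h2 : lamR 𝒰 T z (K₁ ∪ K₂) - r₁ ≤ lamR 𝒰 T z K₂ :=
      le_csInf (SSet_nonempty 𝒰 T z K₂) fun r₂ h₂ => by linarith [key2 r₁ h₁ r₂ h₂]
    linarith
  have h3 : lamR 𝒰 T z (K₁ ∪ K₂) - lamR 𝒰 T z K₂ ≤ lamR 𝒰 T z K₁ :=
    le_csInf (SSet_nonempty 𝒰 T z K₁) step1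
  linarith

lemma lamR_union_ge [NormalSpace Z] (K₁ K₂ : Set Z) (h1 : IsClosed K₁) (h2 : IsClosed K₂)
    (hd : Disjoint K₁ K₂) :
    lamR 𝒰 T z K₁ + lamR 𝒰 T z K₂ ≤ lamR 𝒰 T z (K₁ ∪ K₂) := by
  refine le_csInf (SSet_nonempty 𝒰 T z _) ?_
  rintro r ⟨f, hf, rfl⟩
  obtain ⟨h₀, h₀0, h₀1, h₀mem⟩ := exists_continuous_zero_one_of_isClosed h2 h1 hd.symm
  have hadm₁ : adm K₁ (fun w => f w * h₀ w) := by
    refine ⟨hf.1.mul h₀.continuous, fun w => mul_nonneg (hf.2.1 w) (h₀mem w).1, ?_, ?_⟩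
    · exact fun w => mul_le_one₀ (hf.2.2.1 w) (h₀mem w).1 (h₀mem w).2
    · intro w hw
      have e1 : f w = 1 := hf.2.2.2 w (Or.inl hw)
      have e2 : h₀ w = 1 := h₀1 hw
      show f w * h₀ w = 1
      rw [e1, e2, one_mul]
  have hadm₂ : adm K₂ (fun w => f w * (1 - h₀ w)) := by
    refine ⟨hf.1.mul (continuous_const.sub h₀.continuous),
      fun w => mul_nonneg (hf.2.1 w) (by linarith [(h₀mem w).2]), ?_, ?_⟩
    · exact fun w => mul_le_one₀ (hf.2.2.1 w) (by linarith [(h₀mem w).2])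
        (by linarith [(h₀mem w).1])
    · intro w hw
      have e1 : f w = 1 := hf.2.2.2 w (Or.inr hw)
      have e2 : h₀ w = 0 := h₀0 hw
      show f w * (1 - h₀ w) = 1
      rw [e1, e2]; ring
  have hsum : ∀ n, avg T z f n
      = avg T z (fun w => f w * h₀ w) n + avg T z (fun w => f w * (1 - h₀ w)) n := by
    intro n
    rw [← avg_add]
    congr 1
    funext w
    ring
  have hEq : limU 𝒰 T z f
      = limU 𝒰 T z (fun w => f w * h₀ w) + limU 𝒰 T z (fun w => f w * (1 - h₀ w)) := by
    refine tendsto_nhds_unique (limU_tendsto 𝒰 T z (adm_abs_le hf)) ?_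
    exact ((limU_tendsto 𝒰 T z (adm_abs_le hadm₁)).add
      (limU_tendsto 𝒰 T z (adm_abs_le hadm₂))).congr fun n => (hsum n).symm
  calc lamR 𝒰 T z K₁ + lamR 𝒰 T z K₂
      ≤ limU 𝒰 T z (fun w => f w * h₀ w) + limU 𝒰 T z (fun w => f w * (1 - h₀ w)) :=
        add_le_add (csInf_le (SSet_bddBelow 𝒰 T z _) ⟨_, hadm₁, rfl⟩)
          (csInf_le (SSet_bddBelow 𝒰 T z _) ⟨_, hadm₂, rfl⟩)
    _ = limU 𝒰 T z f := hEq.symm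

end Functional

section Content

variable {Z : Type*} [MetricSpace Z] [CompactSpace Z]
variable (𝒰 : Ultrafilter ℕ) (T : Z → Z) (z : Z)

/-- The content associated to the limit functional. -/
noncomputable def lamContent (h𝒰le : (𝒰 : Filter ℕ) ≤ atTop) : MeasureTheory.Content Z where
  toFun K := (lamR 𝒰 T z (K : Set Z)).toNNReal
  mono' K₁ K₂ h := Real.toNNReal_mono (lamR_mono 𝒰 T z h)
  sup_disjoint' K₁ K₂ hd hc1 hc2 := by
    have hEq : lamR 𝒰 T z ((K₁ ⊔ K₂ : Compacts Z) : Set Z)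
        = lamR 𝒰 T z (K₁ : Set Z) + lamR 𝒰 T z (K₂ : Set Z) := by
      rw [Compacts.coe_sup]
      exact le_antisymm (lamR_union_le 𝒰 T z h𝒰le _ _)
        (lamR_union_ge 𝒰 T z _ _ hc1 hc2 hd)
    show (lamR 𝒰 T z ((K₁ ⊔ K₂ : Compacts Z) : Set Z)).toNNReal
        = (lamR 𝒰 T z (K₁ : Set Z)).toNNReal + (lamR 𝒰 T z (K₂ : Set Z)).toNNReal
    rw [hEq, Real.toNNReal_add (lamR_nonneg 𝒰 T z _) (lamR_nonneg 𝒰 T z _)]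
  sup_le' K₁ K₂ := by
    have h1 : lamR 𝒰 T z ((K₁ ⊔ K₂ : Compacts Z) : Set Z)
        ≤ lamR 𝒰 T z (K₁ : Set Z) + lamR 𝒰 T z (K₂ : Set Z) := by
      rw [Compacts.coe_sup]
      exact lamR_union_le 𝒰 T z h𝒰le _ _
    calc (lamR 𝒰 T z ((K₁ ⊔ K₂ : Compacts Z) : Set Z)).toNNReal
        ≤ (lamR 𝒰 T z (K₁ : Set Z) + lamR 𝒰 T z (K₂ : Set Z)).toNNReal :=
          Real.toNNReal_mono h1
      _ = _ := Real.toNNReal_add (lamR_nonneg 𝒰 T z _) (lamR_nonneg 𝒰 T z _)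

variable [MeasurableSpace Z] [BorelSpace Z]

lemma lamMeasure_open (h𝒰le : (𝒰 : Filter ℕ) ≤ atTop) {U : Set Z} (hU : IsOpen U) :
    (lamContent 𝒰 T z h𝒰le).measure U
      = ⨆ (K : Compacts Z) (_ : (K : Set Z) ⊆ U),
          ((lamR 𝒰 T z (K : Set Z)).toNNReal : ENNReal) := by
  rw [MeasureTheory.Content.measure_apply _ hU.measurableSet,
    MeasureTheory.Content.outerMeasure_of_isOpen _ U hU]
  rfl

end Content

section KeyThm

variable {Z : Type*} [MetricSpace Z] [CompactSpace Z] [MeasurableSpace Z] [BorelSpace Z]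

theorem key (T : Z ≃ₜ Z) (z : Z) (G : Z → ℝ) (M₀ : ℝ) (hG : ∀ w, |G w| ≤ M₀) :
    ∃ μ : MeasureTheory.Measure Z, MeasureTheory.IsProbabilityMeasure μ ∧ μ.map ⇑T = μ ∧
      (∀ A : Set Z, IsClosed A → (∀ n : ℕ, (⇑T)^[n] z ∈ A) → μ Aᶜ = 0) ∧
      (∀ c M : ℝ, 0 ≤ c → 0 < M → (∀ w, G w ≤ M) →
        ∀ C U : Set Z, IsClosed C → (∀ w, w ∉ C → G w ≤ c) → IsOpen U → C ⊆ U →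
          Filter.limsup (avg (⇑T) z G) Filter.atTop ≤ c + M * (μ U).toReal) := by
  classical
  set b : ℝ := Filter.limsup (avg (⇑T) z G) Filter.atTop with hbdef
  have havgG : ∀ n, |avg (⇑T) z G n| ≤ M₀ := avg_abs_le _ _ hG
  have hbddU : IsBoundedUnder (· ≤ ·) atTop (avg (⇑T) z G) :=
    Filter.isBoundedUnder_of ⟨M₀, fun n => (abs_le.1 (havgG n)).2⟩
  have hbddL : IsBoundedUnder (· ≥ ·) atTop (avg (⇑T) z G) :=
    Filter.isBoundedUnder_of ⟨-M₀, fun n => (abs_le.1 (havgG n)).1⟩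
  have hclust : MapClusterPt b atTop (avg (⇑T) z G) := by
    refine (nhds_basis_Ioo_pos b).mapClusterPt_iff_frequently.2 ?_
    intro d hd
    have h1 : ∃ᶠ n in atTop, b - d < avg (⇑T) z G n :=
      frequently_lt_of_lt_limsup hbddL.isCoboundedUnder_le (by rw [← hbdef]; linarith)
    have h2 : ∀ᶠ n in atTop, avg (⇑T) z G n < b + d :=
      eventually_lt_of_limsup_lt (by rw [← hbdef]; linarith) hbddU
    exact (h1.and_eventually h2).mono fun n hn => ⟨hn.1, hn.2⟩
  obtain ⟨𝒰, h𝒰le, h𝒰b⟩ := mapClusterPt_iff_ultrafilter.1 hclust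
  set con := lamContent 𝒰 (⇑T) z h𝒰le with hcon
  have hprob : MeasureTheory.IsProbabilityMeasure con.measure := by
    constructor
    rw [lamMeasure_open 𝒰 (⇑T) z h𝒰le isOpen_univ]
    apply le_antisymm
    · refine iSup₂_le fun K _ => ?_
      have h1 : (lamR 𝒰 (⇑T) z (K : Set Z)).toNNReal ≤ 1 := by
        rw [← Real.toNNReal_one]
        exact Real.toNNReal_mono (lamR_le_one 𝒰 (⇑T) z h𝒰le _)
      exact_mod_cast ENNReal.coe_le_coe.2 h1
    · refine le_iSup₂_of_le ⟨univ, isCompact_univ⟩ subset_rfl ?_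
      have h1 : lamR 𝒰 (⇑T) z ((⟨univ, isCompact_univ⟩ : Compacts Z) : Set Z) = 1 :=
        lamR_univ 𝒰 (⇑T) z h𝒰le
      rw [h1]
      simp
  refine ⟨con.measure, hprob, ?_, ?_, ?_⟩
  -- invariance
  · have hcov : ∀ ⦃K : Compacts Z⦄,
        ((con.toFun (K.map ⇑T T.continuous) : ENNReal)) = con.toFun K := by
      intro K
      have hSet : SSet 𝒰 (⇑T) z (⇑T '' (K : Set Z)) = SSet 𝒰 (⇑T) z (K : Set Z) := by
        ext r
        constructor
        · rintro ⟨f, hf, rfl⟩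
          refine ⟨f ∘ ⇑T, ⟨hf.1.comp T.continuous, fun w => hf.2.1 _, fun w => hf.2.2.1 _,
            fun w hw => hf.2.2.2 _ (mem_image_of_mem _ hw)⟩, ?_⟩
          exact (limU_comp 𝒰 (⇑T) z h𝒰le (adm_abs_le hf)).symm
        · rintro ⟨g, hg, rfl⟩
          refine ⟨g ∘ ⇑T.symm, ⟨hg.1.comp T.symm.continuous, fun w => hg.2.1 _,
            fun w => hg.2.2.1 _, ?_⟩, ?_⟩
          · rintro w ⟨k, hk, rfl⟩
            show g (T.symm (T k)) = 1
            rw [Homeomorph.symm_apply_apply]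
            exact hg.2.2.2 _ hk
          · have hgb : ∀ w, |(g ∘ ⇑T.symm) w| ≤ 1 := fun w => adm_abs_le hg _
            have h2 := limU_comp 𝒰 (⇑T) z h𝒰le hgb
            have h3 : (g ∘ ⇑T.symm) ∘ ⇑T = g := by
              funext w
              show g (T.symm (T w)) = g w
              rw [Homeomorph.symm_apply_apply]
            rw [h3] at h2
            exact h2
      show (((lamR 𝒰 (⇑T) z ((K.map ⇑T T.continuous : Compacts Z) : Set Z)).toNNReal : ENNReal))
          = ((lamR 𝒰 (⇑T) z (K : Set Z)).toNNReal : ENNReal)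
      have hco : ((K.map ⇑T T.continuous : Compacts Z) : Set Z) = ⇑T '' (K : Set Z) := rfl
      rw [hco]
      unfold lamR
      rw [hSet]
    refine MeasureTheory.Measure.ext fun s hs => ?_
    rw [MeasureTheory.Measure.map_apply T.continuous.measurable hs,
      MeasureTheory.Content.measure_apply _ (hs.preimage T.continuous.measurable),
      MeasureTheory.Content.measure_apply _ hs,
      con.outerMeasure_preimage T hcov s]
  -- orbit closed sets
  · intro A hA horb
    rw [lamMeasure_open 𝒰 (⇑T) z h𝒰le hA.isOpen_compl]
    refine le_antisymm (iSup₂_le fun K hK => ?_) zero_le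
    have hdisj : Disjoint A (K : Set Z) := Set.disjoint_left.mpr fun w hwA hwK => (hK hwK) hwA
    obtain ⟨h₀, h₀0, h₀1, h₀mem⟩ :=
      exists_continuous_zero_one_of_isClosed hA K.2.isClosed hdisj
    have hadm : adm (K : Set Z) ⇑h₀ :=
      ⟨h₀.continuous, fun w => (h₀mem w).1, fun w => (h₀mem w).2, fun w hw => h₀1 hw⟩
    have havg0 : ∀ n, avg (⇑T) z (⇑h₀) n = 0 := by
      intro n
      rw [avg]
      have hz : ∀ i ∈ Finset.range n, (⇑h₀) ((⇑T)^[i] z) = 0 := fun i _ => h₀0 (horb i)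
      rw [Finset.sum_congr rfl hz]
      simp
    have hlim0 : limU 𝒰 (⇑T) z (⇑h₀) = 0 := by
      refine tendsto_nhds_unique (limU_tendsto 𝒰 (⇑T) z (adm_abs_le hadm)) ?_
      rw [show (avg (⇑T) z (⇑h₀)) = fun _ => (0 : ℝ) from funext havg0]
      exact tendsto_const_nhds
    have h0mem : (0 : ℝ) ∈ SSet 𝒰 (⇑T) z (K : Set Z) := ⟨⇑h₀, hadm, hlim0.symm⟩
    have hle0 : lamR 𝒰 (⇑T) z (K : Set Z) ≤ 0 :=
      csInf_le (SSet_bddBelow 𝒰 (⇑T) z (K : Set Z)) h0mem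
    show ((lamR 𝒰 (⇑T) z (K : Set Z)).toNNReal : ENNReal) ≤ 0
    rw [Real.toNNReal_of_nonpos hle0]
    simp
  -- main estimate
  · intro c M hc hM hGM C U hC hCc hU hCU
    have hCcpt : IsCompact C := hC.isCompact
    have step1 : ∀ r ∈ SSet 𝒰 (⇑T) z C, b ≤ c + M * r := by
      rintro r ⟨f, hf, rfl⟩
      have hpt : ∀ w, G w ≤ c + M * f w := by
        intro w
        by_cases hw : w ∈ C
        · have hf1 : f w = 1 := hf.2.2.2 w hw
          rw [hf1, mul_one]
          have := hGM w
          linarith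
        · have h2 := hCc w hw
          have h3 : 0 ≤ M * f w := mul_nonneg hM.le (hf.2.1 w)
          linarith
      have h1 : ∀ n, avg (⇑T) z G n ≤ avg (⇑T) z (fun _ => c) n + M * avg (⇑T) z f n := by
        intro n
        rw [← avg_smul, ← avg_add]
        exact avg_mono (⇑T) z hpt n
      have h2 : Tendsto (fun n => avg (⇑T) z (fun _ => c) n + M * avg (⇑T) z f n) 𝒰
          (nhds (c + M * limU 𝒰 (⇑T) z f)) :=
        ((avg_const_tendsto (⇑T) z c).mono_left h𝒰le).add
          ((limU_tendsto 𝒰 (⇑T) z (adm_abs_le hf)).const_mul M)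
      exact le_of_tendsto_of_tendsto' h𝒰b h2 h1
    have step2 : b ≤ c + M * lamR 𝒰 (⇑T) z C := by
      have hdiv : (b - c) / M ≤ lamR 𝒰 (⇑T) z C := by
        refine le_csInf (SSet_nonempty 𝒰 (⇑T) z C) fun r hr => ?_
        rw [div_le_iff₀ hM]
        have h4 := step1 r hr
        have h5 : M * r = r * M := mul_comm _ _
        linarith
      rw [div_le_iff₀ hM] at hdiv
      have h6 : lamR 𝒰 (⇑T) z C * M = M * lamR 𝒰 (⇑T) z C := mul_comm _ _
      linarith
    have step3 : ((lamR 𝒰 (⇑T) z C).toNNReal : ENNReal) ≤ con.measure U := by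
      rw [lamMeasure_open 𝒰 (⇑T) z h𝒰le hU]
      exact le_iSup₂_of_le ⟨C, hCcpt⟩ hCU le_rfl
    haveI := hprob
    have hfin : con.measure U ≠ ⊤ := MeasureTheory.measure_ne_top _ U
    have step4 : lamR 𝒰 (⇑T) z C ≤ (con.measure U).toReal := by
      have h1 : (((lamR 𝒰 (⇑T) z C).toNNReal : ENNReal)).toReal = lamR 𝒰 (⇑T) z C := by
        rw [ENNReal.coe_toReal, Real.coe_toNNReal _ (lamR_nonneg 𝒰 (⇑T) z C)]
      rw [← h1]
      exact ENNReal.toReal_mono hfin step3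
    have h7 := mul_le_mul_of_nonneg_left step4 hM.le
    show b ≤ c + M * (con.measure U).toReal
    linarith

end KeyThm

end Stmt16Aux

set_option maxHeartbeats 2000000

open Stmt16Aux

theorem stmt16 {X Y : Type*} [MetricSpace X] [CompactSpace X] [MetricSpace Y] [CompactSpace Y]
    [MeasurableSpace X] [BorelSpace X] [MeasurableSpace Y] [BorelSpace Y] {m : ℕ} (hm : 1 ≤ m)
    (φ : X → X) (hφ : IsHomeomorph φ)
    -- `(X,φ)` is minimal
    (hmin : ∀ x : X, Dense (Set.range fun n : ℕ => φ^[n] x))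
    (ψ : Y → Y) (hψ : IsHomeomorph ψ)
    (π : X → Y) (hπ : Continuous π) (hπsurj : Function.Surjective π)
    (hfac : π ∘ φ = ψ ∘ π)
    -- the metric on `Y` is `ψ`-invariant (so `(Y,ψ)` is equicontinuous)
    (hinvY : ∀ y y' : Y, dist (ψ y) (ψ y') = dist y y')
    -- the metric on `X` dominates the pulled-back metric on `Y`
    (hdom : ∀ x x' : X, dist (π x) (π x') ≤ dist x x')
    -- `(Y,ψ)` is uniquely ergodic with invariant measure `ν`
    (ν : Measure Y) [IsProbabilityMeasure ν] (hν : ν.map ψ = ν)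
    (hue : ∀ ν' : Measure Y, IsProbabilityMeasure ν' → ν'.map ψ = ν' → ν' = ν)
    -- `(X,φ)` is an `m`:1 topomorphic extension of `(Y,ψ)`:
    (γ : Fin m → Y → X) (hγm : ∀ i, Measurable (γ i)) (hγsec : ∀ i y, π (γ i y) = y)
    (hγfull : ∀ μ : Measure X, IsProbabilityMeasure μ → μ.map φ = μ →
      μ {x : X | ∃ (i : Fin m) (y : Y), γ i y = x} = 1)
    -- … and `m` is the least integer with this property
    (hleast : ∀ k < m, ¬ ∃ γ' : Fin k → Y → X, (∀ i, Measurable (γ' i)) ∧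
      (∀ i y, π (γ' i y) = y) ∧
      ∀ μ : Measure X, IsProbabilityMeasure μ → μ.map φ = μ →
        μ {x : X | ∃ (i : Fin k) (y : Y), γ' i y = x} = 1) :
    -- then `(X,φ)` is factor mean `(m+1)`-equicontinuous
    ∀ ε > (0 : ℝ), ∃ δ > (0 : ℝ), ∀ x : Fin (m + 1) → X,
      Dmax (fun i => π (x i)) < δ → DBar φ x < ε := by
  intro ε hε
  classical
  haveI : Nonempty (Fin m) := ⟨⟨0, hm⟩⟩
  have hφm : Measurable φ := hφ.continuous.measurable
  have hψm : Measurable ψ := hψ.continuous.measurable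
  have hπm : Measurable π := hπ.measurable
  have hpair : ∃ i j : Fin (m + 1), i < j :=
    ⟨⟨0, by omega⟩, ⟨1, by omega⟩, by simp [Fin.lt_def]⟩
  -- the basic distance bound on `X`
  set M : ℝ := Metric.diam (Set.univ : Set X) + 1 with hMdef
  have hdiam0 : 0 ≤ Metric.diam (Set.univ : Set X) := Metric.diam_nonneg
  have hM0 : 0 < M := by rw [hMdef]; linarith
  have hdistM : ∀ a b : X, dist a b ≤ M := by
    intro a b
    have h1 : dist a b ≤ Metric.diam (Set.univ : Set X) :=
      Metric.dist_le_diam_of_mem isCompact_univ.isBounded (mem_univ a) (mem_univ b)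
    rw [hMdef]; linarith
  have hm0R : (0 : ℝ) < m := by exact_mod_cast hm
  set ε'' : ℝ := ε / 16 with hε''def
  have hε''0 : 0 < ε'' := by rw [hε''def]; linarith
  set κ : ℝ := ε'' * ε / (8 * M * (m + 1) * m) with hκdef
  have hden0 : (0 : ℝ) < 8 * M * ((m : ℝ) + 1) * m := by
    have h1 : (0 : ℝ) < 8 * M := by linarith
    have h2 : (0 : ℝ) < (m : ℝ) + 1 := by linarith
    exact mul_pos (mul_pos h1 h2) hm0R
  have hκ0 : 0 < κ := by
    rw [hκdef]
    exact div_pos (by nlinarith) hden0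
  -- Kuratowski embedding
  set e := kuratowskiEmbedding X with hedef
  have he : Isometry e := kuratowskiEmbedding.isometry X
  obtain ⟨R, hR⟩ : ∃ R : ℝ, ∀ a : X, ‖e a‖ ≤ R := by
    obtain ⟨R, hR⟩ := isBounded_iff_forall_norm_le.1 (isCompact_range he.continuous).isBounded
    exact ⟨R, fun a => hR _ (mem_range_self a)⟩
  have hsm : ∀ i : Fin m, StronglyMeasurable (fun y => e (γ i y)) := fun i =>
    he.continuous.comp_stronglyMeasurable (hγm i).stronglyMeasurable
  have hint : ∀ i : Fin m, Integrable (fun y => e (γ i y)) ν := fun i =>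
    (integrable_const R).mono' (hsm i).aestronglyMeasurable
      (Filter.Eventually.of_forall fun y => hR _)
  choose g hg hgint using
    fun i : Fin m => (hint i).exists_boundedContinuous_integral_sub_le hκ0
  -- Markov bad sets in Y
  set B : Fin m → Set Y := fun i => {y | ε'' ≤ ‖e (γ i y) - g i y‖} with hBdef
  have hBmeas : ∀ i, MeasurableSet (B i) := by
    intro i
    have h1 : Measurable (fun y => ‖e (γ i y) - g i y‖) := by
      have hc : Continuous fun p : X × Y => ‖e p.1 - g i p.2‖ :=
        ((he.continuous.comp continuous_fst).sub ((g i).continuous.comp continuous_snd)).norm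
      exact hc.measurable.comp ((hγm i).prodMk measurable_id)
    exact measurableSet_le measurable_const h1
  have hBsmall : ∀ i, ν (B i) ≤ ENNReal.ofReal (κ / ε'') := by
    intro i
    have hnn : (0 : Y → ℝ) ≤ᵐ[ν] fun y => ‖e (γ i y) - g i y‖ :=
      Filter.Eventually.of_forall fun y => norm_nonneg _
    have hms := mul_meas_ge_le_integral_of_nonneg hnn (((hint i).sub (hgint i)).norm) ε''
    have hBi : {y | ε'' ≤ ‖e (γ i y) - g i y‖} = B i := rfl
    rw [hBi] at hms
    have h2 : (ν (B i)).toReal ≤ κ / ε'' := by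
      rw [le_div_iff₀ hε''0]
      calc (ν (B i)).toReal * ε'' = ε'' * (ν (B i)).toReal := mul_comm _ _
        _ ≤ ∫ y, ‖e (γ i y) - g i y‖ ∂ν := hms
        _ ≤ κ := hg i
    rw [← ENNReal.ofReal_toReal (measure_ne_top ν (B i))]
    exact ENNReal.ofReal_le_ofReal h2
  -- the good base set
  set Gset : Set Y := ⋂ i : Fin m, (B i)ᶜ with hGdef
  have hGmeas : MeasurableSet Gset := MeasurableSet.iInter fun i => (hBmeas i).compl
  have hGc : ν Gsetᶜ ≤ (m : ENNReal) * ENNReal.ofReal (κ / ε'') := by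
    have h1 : Gsetᶜ = ⋃ i, B i := by
      rw [hGdef, Set.compl_iInter]
      simp
    rw [h1]
    calc ν (⋃ i, B i) ≤ ∑' i : Fin m, ν (B i) := measure_iUnion_le _
      _ ≤ ∑' _i : Fin m, ENNReal.ofReal (κ / ε'') := ENNReal.tsum_le_tsum fun i => hBsmall i
      _ = (m : ENNReal) * ENNReal.ofReal (κ / ε'') := by
          rw [tsum_fintype]
          simp [Finset.sum_const, Finset.card_univ, nsmul_eq_mul]
  -- uniform continuity of the approximants and the choice of δ
  have hucg : ∀ i : Fin m, ∃ d > (0:ℝ), ∀ y y' : Y, dist y y' < d →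
      dist (g i y) (g i y') < ε'' := fun i =>
    Metric.uniformContinuous_iff.1
      (CompactSpace.uniformContinuous_of_continuous (g i).continuous) ε'' hε''0
  choose df hdf0 hdf using hucg
  set δ : ℝ := Finset.univ.inf' Finset.univ_nonempty df with hδdef
  have hδ0 : 0 < δ := by
    rw [hδdef, Finset.lt_inf'_iff]
    exact fun i _ => hdf0 i
  have hδle : ∀ i, δ ≤ df i := fun i => Finset.inf'_le _ (Finset.mem_univ i)
  refine ⟨δ, hδ0, ?_⟩
  intro x hx
  -- the product homeomorphism
  set Th : (Fin (m+1) → X) ≃ₜ (Fin (m+1) → X) :=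
    Homeomorph.piCongrRight (fun _ : Fin (m+1) => hφ.homeomorph) with hThdef
  have hThco : ∀ w : Fin (m+1) → X, ⇑Th w = fun j => φ (w j) := fun w => rfl
  have hiter : ∀ (n : ℕ) (w : Fin (m+1) → X), (⇑Th)^[n] w = fun j => φ^[n] (w j) := by
    intro n
    induction n with
    | zero => intro w; funext j; simp
    | succ n ih =>
      intro w
      rw [Function.iterate_succ_apply', ih w]
      funext j
      rw [hThco]
      simp [Function.iterate_succ_apply']
  have hfaci : ∀ (n : ℕ) (a : X), π (φ^[n] a) = ψ^[n] (π a) := by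
    intro n
    induction n with
    | zero => intro a; simp
    | succ n ih =>
      intro a
      rw [Function.iterate_succ_apply', Function.iterate_succ_apply', ← ih a]
      exact congrFun hfac _
  have hinvi : ∀ (n : ℕ) (y y' : Y), dist (ψ^[n] y) (ψ^[n] y') = dist y y' := by
    intro n
    induction n with
    | zero => intro y y'; simp
    | succ n ih =>
      intro y y'
      rw [Function.iterate_succ_apply', Function.iterate_succ_apply', hinvY, ih]
  have hGb : ∀ w : Fin (m+1) → X, |Dmin w| ≤ M := by
    intro w
    obtain ⟨i, j, hij⟩ := hpair
    have h1 : 0 ≤ Dmin w := Dmin_nonneg ⟨i, j, hij⟩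
    have h2 : Dmin w ≤ M := (Dmin_le hij).trans (hdistM _ _)
    rw [abs_of_nonneg h1]; exact h2
  obtain ⟨μ, hμprob, hμmap, hμorb, hμbound⟩ := key Th x Dmin M hGb
  -- rewrite DBar as a limsup of orbital averages
  have hDBar : DBar φ x = Filter.limsup (avg (⇑Th) x Dmin) Filter.atTop := by
    have hfun : (fun n : ℕ => (∑ i ∈ Finset.range n, Dmin fun j => φ^[i] (x j)) / (n : ℝ))
        = avg (⇑Th) x Dmin := by
      funext n
      rw [avg]
      congr 1
      refine Finset.sum_congr rfl fun i _ => ?_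
      rw [hiter i x]
    rw [DBar, hfun]
  -- the closed invariant-orbit set A
  set A : Set (Fin (m+1) → X) :=
    {w | ∀ j k : Fin (m+1), dist (π (w j)) (π (w k)) ≤ Dmax (fun i => π (x i))} with hAdef
  have hAclosed : IsClosed A := by
    have hAi : A = ⋂ j, ⋂ k, {w : Fin (m+1) → X |
        dist (π (w j)) (π (w k)) ≤ Dmax (fun i => π (x i))} := by
      ext w
      simp [hAdef, Set.mem_iInter]
    rw [hAi]
    refine isClosed_iInter fun j => isClosed_iInter fun k => ?_
    exact isClosed_le ((hπ.comp (continuous_apply j)).dist (hπ.comp (continuous_apply k)))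
      continuous_const
  have hDmax0 : 0 ≤ Dmax (fun i => π (x i)) := Dmax_nonneg hpair
  have horbA : ∀ n : ℕ, (⇑Th)^[n] x ∈ A := by
    intro n
    rw [hiter n x, hAdef]
    simp only [Set.mem_setOf_eq]
    intro j k
    rw [hfaci, hfaci, hinvi]
    rcases lt_trichotomy j k with h | h | h
    · exact dist_le_Dmax (w := fun i => π (x i)) h
    · rw [h]; simpa using hDmax0
    · rw [dist_comm]; exact dist_le_Dmax (w := fun i => π (x i)) h
  have hA0 : μ Aᶜ = 0 := hμorb A hAclosed horbA
  -- the section range set is measurable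
  set Γs : Set X := {a : X | ∃ (i : Fin m) (y : Y), γ i y = a} with hΓdef
  have hΓiU : Γs = ⋃ i : Fin m, Set.range (γ i) := by
    ext a
    simp [hΓdef, Set.mem_iUnion, Set.mem_range]
  have hγinj : ∀ i, Function.Injective (γ i) := by
    intro i a b hab
    have h1 := congrArg π hab
    rwa [hγsec, hγsec] at h1
  have hΓmeas : MeasurableSet Γs := by
    rw [hΓiU]
    refine MeasurableSet.iUnion fun i => ?_
    rw [← Set.image_univ]
    exact MeasurableSet.univ.image_of_measurable_injOn (hγm i) (hγinj i).injOn
  -- marginals of μ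
  have hmarg : ∀ j : Fin (m+1),
      (μ.map (fun w : Fin (m+1) → X => w j)).map φ = μ.map (fun w : Fin (m+1) → X => w j) := by
    intro j
    rw [Measure.map_map hφm (measurable_pi_apply j)]
    have hc : φ ∘ (fun w : Fin (m+1) → X => w j)
        = (fun w : Fin (m+1) → X => w j) ∘ ⇑Th := rfl
    rw [hc, ← Measure.map_map (measurable_pi_apply j) Th.continuous.measurable, hμmap]
  have hmargprob : ∀ j : Fin (m+1),
      IsProbabilityMeasure (μ.map (fun w : Fin (m+1) → X => w j)) := fun j =>
    Measure.isProbabilityMeasure_map (measurable_pi_apply j).aemeasurable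
  have hmargΓ : ∀ j : Fin (m+1), (μ.map (fun w : Fin (m+1) → X => w j)) Γs = 1 := by
    intro j
    have h1 := hγfull (μ.map (fun w : Fin (m+1) → X => w j)) (hmargprob j) (hmarg j)
    rw [hΓdef]
    exact h1
  have hmargπ : ∀ j : Fin (m+1), (μ.map (fun w : Fin (m+1) → X => w j)).map π = ν := by
    intro j
    haveI := hmargprob j
    refine hue _ (Measure.isProbabilityMeasure_map hπm.aemeasurable) ?_
    rw [Measure.map_map hψm hπm, ← hfac, ← Measure.map_map hπm hφm, hmarg j]
  -- the bad sets in the product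
  set badΓ : Set (Fin (m+1) → X) :=
    ⋃ j : Fin (m+1), (fun w : Fin (m+1) → X => w j) ⁻¹' Γsᶜ with hbadΓdef
  set badG : Set (Fin (m+1) → X) :=
    ⋃ j : Fin (m+1), (fun w : Fin (m+1) → X => w j) ⁻¹' (π ⁻¹' Gsetᶜ) with hbadGdef
  have hbadΓ0 : μ badΓ = 0 := by
    rw [hbadΓdef]
    refine measure_iUnion_null fun j => ?_
    rw [← Measure.map_apply (measurable_pi_apply j) hΓmeas.compl]
    haveI := hmargprob j
    rw [measure_compl hΓmeas (measure_ne_top _ _), hmargΓ j]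
    simp
  have hbadG : μ badG ≤ ((m+1 : ℕ) : ENNReal) * ((m : ENNReal) * ENNReal.ofReal (κ / ε'')) := by
    rw [hbadGdef]
    have hje : ∀ j : Fin (m+1),
        μ ((fun w : Fin (m+1) → X => w j) ⁻¹' (π ⁻¹' Gsetᶜ)) = ν Gsetᶜ := by
      intro j
      rw [← Measure.map_apply (measurable_pi_apply j) (hπm hGmeas.compl),
        ← Measure.map_apply hπm hGmeas.compl, hmargπ j]
    calc μ (⋃ j : Fin (m+1), (fun w : Fin (m+1) → X => w j) ⁻¹' (π ⁻¹' Gsetᶜ))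
        ≤ ∑' j : Fin (m+1), μ ((fun w : Fin (m+1) → X => w j) ⁻¹' (π ⁻¹' Gsetᶜ)) :=
          measure_iUnion_le _
      _ = ∑' _j : Fin (m+1), ν Gsetᶜ := by
          congr 1
          funext j
          exact hje j
      _ = ((m+1 : ℕ) : ENNReal) * ν Gsetᶜ := by
          rw [tsum_fintype]
          simp [Finset.sum_const, Finset.card_univ, nsmul_eq_mul]
      _ ≤ ((m+1 : ℕ) : ENNReal) * ((m : ENNReal) * ENNReal.ofReal (κ / ε'')) :=
          mul_le_mul_right hGc _
  -- the open set U and the closed set C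
  set Uset : Set (Fin (m+1) → X) :=
    ⋂ j, ⋂ k, {w : Fin (m+1) → X | j < k → ε/4 < dist (w j) (w k)} with hUdef
  have hUopen : IsOpen Uset := by
    rw [hUdef]
    refine isOpen_iInter_of_finite fun j => isOpen_iInter_of_finite fun k => ?_
    by_cases hjk : j < k
    · have h1 : {w : Fin (m+1) → X | j < k → ε/4 < dist (w j) (w k)}
          = {w : Fin (m+1) → X | ε/4 < dist (w j) (w k)} := by
        ext w; simp [hjk]
      rw [h1]
      exact isOpen_lt continuous_const ((continuous_apply j).dist (continuous_apply k))
    · have h1 : {w : Fin (m+1) → X | j < k → ε/4 < dist (w j) (w k)} = univ := by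
        ext w; simp [hjk]
      rw [h1]
      exact isOpen_univ
  set Cset : Set (Fin (m+1) → X) :=
    ⋂ j, ⋂ k, {w : Fin (m+1) → X | j < k → ε/2 ≤ dist (w j) (w k)} with hCdef
  have hCclosed : IsClosed Cset := by
    rw [hCdef]
    refine isClosed_iInter fun j => isClosed_iInter fun k => ?_
    by_cases hjk : j < k
    · have h1 : {w : Fin (m+1) → X | j < k → ε/2 ≤ dist (w j) (w k)}
          = {w : Fin (m+1) → X | ε/2 ≤ dist (w j) (w k)} := by
        ext w; simp [hjk]
      rw [h1]
      exact isClosed_le continuous_const ((continuous_apply j).dist (continuous_apply k))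
    · have h1 : {w : Fin (m+1) → X | j < k → ε/2 ≤ dist (w j) (w k)} = univ := by
        ext w; simp [hjk]
      rw [h1]
      exact isClosed_univ
  have hCc : ∀ w : Fin (m+1) → X, w ∉ Cset → Dmin w ≤ ε/2 := by
    intro w hw
    rw [hCdef] at hw
    simp only [Set.mem_iInter, Set.mem_setOf_eq, not_forall] at hw
    obtain ⟨j, k, hjk, hlt⟩ := hw
    push_neg at hlt
    exact (Dmin_le hjk).trans hlt.le
  have hCU : Cset ⊆ Uset := by
    intro w hw
    rw [hCdef] at hw
    rw [hUdef]
    simp only [Set.mem_iInter, Set.mem_setOf_eq] at hw ⊢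
    intro j k hjk
    have h1 := hw j k hjk
    linarith
  -- U is contained in the bad set
  have hUsub : Uset ⊆ Aᶜ ∪ badΓ ∪ badG := by
    intro w hwU
    by_contra hnot
    simp only [Set.mem_union, not_or] at hnot
    obtain ⟨⟨hnA, hnΓ⟩, hnG⟩ := hnot
    have hwA : w ∈ A := Set.not_notMem.1 fun h => hnA h
    have hΓall : ∀ j : Fin (m+1), w j ∈ Γs := by
      intro j
      by_contra hj
      exact hnΓ (by rw [hbadΓdef]; exact Set.mem_iUnion.2 ⟨j, hj⟩)
    have hGall : ∀ j : Fin (m+1), π (w j) ∈ Gset := by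
      intro j
      by_contra hj
      exact hnG (by rw [hbadGdef]; exact Set.mem_iUnion.2 ⟨j, hj⟩)
    have hsel : ∀ j : Fin (m+1), ∃ i : Fin m, γ i (π (w j)) = w j := by
      intro j
      obtain ⟨i, y, hiy⟩ := hΓall j
      refine ⟨i, ?_⟩
      have h1 : y = π (w j) := by rw [← hiy, hγsec]
      rw [← h1]
      exact hiy
    choose sel hselEq using hsel
    obtain ⟨j, k, hjk, hsame⟩ := Fintype.exists_ne_map_eq_of_card_lt sel (by simp)
    set i := sel j with hidef
    have hwj : γ i (π (w j)) = w j := hselEq j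
    have hwk : γ i (π (w k)) = w k := by rw [hsame]; exact hselEq k
    have hbase : dist (π (w j)) (π (w k)) < δ := by
      have h1 : dist (π (w j)) (π (w k)) ≤ Dmax (fun i => π (x i)) := hwA j k
      exact lt_of_le_of_lt h1 hx
    have hGj : ‖e (γ i (π (w j))) - g i (π (w j))‖ < ε'' := by
      have h1 := hGall j
      rw [hGdef] at h1
      simp only [Set.mem_iInter, Set.mem_compl_iff, hBdef, Set.mem_setOf_eq, not_le] at h1
      exact h1 i
    have hGk : ‖e (γ i (π (w k))) - g i (π (w k))‖ < ε'' := by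
      have h1 := hGall k
      rw [hGdef] at h1
      simp only [Set.mem_iInter, Set.mem_compl_iff, hBdef, Set.mem_setOf_eq, not_le] at h1
      exact h1 i
    have hdjk : dist (w j) (w k) < 3 * ε'' := by
      have h0 : dist (w j) (w k) = dist (e (w j)) (e (w k)) := (he.dist_eq _ _).symm
      have h4 : dist (e (w j)) (e (w k)) ≤ dist (e (w j)) (g i (π (w j)))
          + dist (g i (π (w j))) (g i (π (w k))) + dist (g i (π (w k))) (e (w k)) :=
        dist_triangle4 _ _ _ _
      have t1 : dist (e (w j)) (g i (π (w j))) < ε'' := by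
        have h5 := hGj
        rw [hwj] at h5
        rw [dist_eq_norm]
        exact h5
      have t2 : dist (g i (π (w j))) (g i (π (w k))) < ε'' :=
        hdf i _ _ (lt_of_lt_of_le hbase (hδle i))
      have t3 : dist (g i (π (w k))) (e (w k)) < ε'' := by
        have h5 := hGk
        rw [hwk] at h5
        rw [dist_comm, dist_eq_norm]
        exact h5
      linarith
    have hUw : ∀ j' k' : Fin (m+1), j' < k' → ε/4 < dist (w j') (w k') := by
      have h1 := hwU
      rw [hUdef] at h1
      simpa [Set.mem_iInter] using h1
    have h3e : 3 * ε'' < ε/4 := by rw [hε''def]; linarith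
    rcases hjk.lt_or_gt with h | h
    · have h5 := hUw j k h
      linarith
    · have h5 := hUw k j h
      rw [dist_comm] at h5
      linarith
  -- measure estimate for U
  have hμU : μ Uset ≤ ((m+1 : ℕ) : ENNReal) * ((m : ENNReal) * ENNReal.ofReal (κ / ε'')) := by
    calc μ Uset ≤ μ (Aᶜ ∪ badΓ ∪ badG) := measure_mono hUsub
      _ ≤ μ (Aᶜ ∪ badΓ) + μ badG := measure_union_le _ _
      _ ≤ (μ Aᶜ + μ badΓ) + μ badG := add_le_add_left (measure_union_le _ _) _
      _ = μ badG := by rw [hA0, hbadΓ0]; simp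
      _ ≤ _ := hbadG
  -- numerics
  have hmne : (m : ℝ) ≠ 0 := ne_of_gt hm0R
  have hMne : M ≠ 0 := ne_of_gt hM0
  have hval : κ / ε'' = ε / (8 * M * ((m:ℝ) + 1) * m) := by
    rw [hκdef, hε''def]
    have h16 : (ε / 16) ≠ 0 := by positivity
    field_simp
  have hκε''0 : 0 ≤ κ / ε'' := le_of_lt (div_pos hκ0 hε''0)
  have hreal : ((m : ℝ) + 1) * ((m : ℝ) * (κ / ε'')) = ε / (8 * M) := by
    rw [hval]
    field_simp
  have hofReal : ((m+1 : ℕ) : ENNReal) * ((m : ENNReal) * ENNReal.ofReal (κ / ε''))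
      = ENNReal.ofReal (ε / (8 * M)) := by
    rw [← hreal, ENNReal.ofReal_mul (by positivity), ENNReal.ofReal_mul (by positivity)]
    congr 1
    · rw [← ENNReal.ofReal_natCast (m+1)]
      congr 1
      push_cast
      ring
    · congr 1
      rw [← ENNReal.ofReal_natCast m]
  have htoReal : (μ Uset).toReal ≤ ε / (8 * M) := by
    refine ENNReal.toReal_le_of_le_ofReal (by positivity) ?_
    rw [← hofReal]
    exact hμU
  -- conclusion
  have hfinal := hμbound (ε/2) M (by linarith) hM0 (fun w => (abs_le.1 (hGb w)).2)
    Cset Uset hCclosed hCc hUopen hCU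
  rw [hDBar]
  have h8 : M * (μ Uset).toReal ≤ M * (ε / (8 * M)) :=
    mul_le_mul_of_nonneg_left htoReal hM0.le
  have h9 : M * (ε / (8 * M)) = ε / 8 := by
    field_simp
  linarith
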